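/- arXiv:1306.4016 — 4 statements merged into one kernel-verified Lean document; each statement's English description precedes it below -/
import Mathlib

section
/- Let $a_1,\dots,a_{m-1}, c, b_{m-1},\dots,b_1$ be nonzero complex numbers and for $0 \le k \le 2m-1$ define $p_0 = 1$, $p_k = a_1\cdots a_{k-1}(a_k+b_k)$ for $1 \le k \le m-1$, and $p_k = a_1\cdots a_{m-1}\, c\, b_{m-1}\cdots b_{2m-k}$ for $m \le k \le 2m-1$. Then for every $1 \le l \le m-1$, the alternating sum $\sum_{k=0}^{l} (-1)^k p_{l-k}\, p_{2m-1+k-l}$ equals $(a_1\cdots a_l)^2\, a_{l+1}\cdots a_{m-1}\, c\, b_{m-1}\cdots b_{l+1}$. -/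
/-!
Write `A = a₁⋯a_{m-1}` and `q_j = a₁⋯a_j · A c · b_{m-1}⋯b_{j+1}` (`crossTerm a b c (m-1) j`).
Each product of complementary Plücker coordinates splits as `p_j p_{2m-1-j} = q_j + q_{j-1}`
(with `p_0 p_{2m-1} = q_0`), so the alternating sum telescopes to `q_l`, which is the right-hand
side.
-/

open Finset

theorem sum_range_neg_one_pow_mul_telescope {R : Type*} [CommRing R] (f g : ℕ → R)
    (n : ℕ) (h0 : g 0 = f 0) (hg : ∀ j < n, g (j + 1) = f (j + 1) + f j) :
    ∑ k ∈ range (n + 1), (-1 : R) ^ k * g (n - k) = f n := by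
  induction n with
  | zero => simp [h0]
  | succ n ih =>
    rw [sum_range_succ', Nat.sub_zero, hg n n.lt_succ_self]
    simp only [pow_succ, Nat.add_sub_add_right, mul_neg_one, neg_mul, sum_neg_distrib]
    rw [ih fun j hj => hg j (by omega)]
    ring

section CrossTerm

variable {R : Type*} [CommRing R] (a b : ℕ → R) (c : R) (n : ℕ)

def crossTerm (j : ℕ) : R :=
  (∏ i ∈ Icc 1 j, a i) * (∏ i ∈ Icc 1 n, a i) * c * ∏ i ∈ Icc (j + 1) n, b i

theorem crossTerm_zero :
    crossTerm a b c n 0 = (∏ i ∈ Icc 1 n, a i) * c * ∏ i ∈ Icc 1 n, b i := by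
  simp [crossTerm]

theorem crossTerm_succ_add_crossTerm {j : ℕ} (hj : j + 1 ≤ n) :
    crossTerm a b c n (j + 1) + crossTerm a b c n j =
      ((∏ i ∈ Icc 1 j, a i) * (a (j + 1) + b (j + 1))) *
        ((∏ i ∈ Icc 1 n, a i) * c * ∏ i ∈ Icc (j + 2) n, b i) := by
  rw [crossTerm, crossTerm, prod_Icc_succ_top (by omega), Icc_eq_cons_Ioc hj, prod_cons,
    ← Icc_add_one_left_eq_Ioc]
  ring

theorem crossTerm_eq {l : ℕ} (hl : l ≤ n) :
    crossTerm a b c n l =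
      (∏ i ∈ Icc 1 l, a i) ^ 2 * (∏ i ∈ Icc (l + 1) n, a i) * c * ∏ i ∈ Icc (l + 1) n, b i := by
  have hsplit : ∏ i ∈ Icc 1 n, a i = (∏ i ∈ Icc 1 l, a i) * ∏ i ∈ Icc (l + 1) n, a i := by
    have hIcc : ∀ x, Icc 1 x = Ioc 0 x := Icc_add_one_left_eq_Ioc 0
    rw [hIcc, hIcc, Icc_add_one_left_eq_Ioc, prod_Ioc_consecutive _ l.zero_le hl]
  rw [crossTerm, hsplit]
  ring

end CrossTerm

theorem stmt0_general (m : ℕ) (a b : ℕ → ℂ) (c : ℂ)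
    (p : ℕ → ℂ) (hp0 : p 0 = 1)
    (hp1 : ∀ k, 1 ≤ k → k ≤ m - 1 →
      p k = (∏ i ∈ Finset.Icc 1 (k - 1), a i) * (a k + b k))
    (hp2 : ∀ k, m ≤ k → k ≤ 2 * m - 1 →
      p k = (∏ i ∈ Finset.Icc 1 (m - 1), a i) * c * ∏ i ∈ Finset.Icc (2 * m - k) (m - 1), b i)
    (l : ℕ) (hl1 : 1 ≤ l) (hl2 : l ≤ m - 1) :
    ∑ k ∈ Finset.range (l + 1), (-1 : ℂ) ^ k * p (l - k) * p (2 * m - 1 + k - l)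
      = (∏ i ∈ Finset.Icc 1 l, a i) ^ 2 * (∏ i ∈ Finset.Icc (l + 1) (m - 1), a i) * c *
        ∏ i ∈ Finset.Icc (l + 1) (m - 1), b i := by
  have hpair0 : p 0 * p (2 * m - 1) = crossTerm a b c (m - 1) 0 := by
    rw [crossTerm_zero, hp0, one_mul, hp2 _ (by omega) le_rfl,
      show 2 * m - (2 * m - 1) = 1 by omega]
  have hpair : ∀ j < l, p (j + 1) * p (2 * m - 1 - (j + 1)) =
      crossTerm a b c (m - 1) (j + 1) + crossTerm a b c (m - 1) j := by
    intro j hj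
    rw [crossTerm_succ_add_crossTerm a b c (m - 1) (by omega), hp1 (j + 1) (by omega) (by omega),
      hp2 _ (by omega) (by omega), Nat.add_sub_cancel,
      show 2 * m - (2 * m - 1 - (j + 1)) = j + 2 by omega]
  rw [← crossTerm_eq a b c (m - 1) hl2,
    ← sum_range_neg_one_pow_mul_telescope _ (fun j => p j * p (2 * m - 1 - j)) l hpair0 hpair]
  refine sum_congr rfl fun k hk => ?_
  rw [mul_assoc, show 2 * m - 1 + k - l = 2 * m - 1 - (l - k) by have := mem_range.1 hk; omega]

/-- Lemma 4.3 (telescoping of the alternating sum of Plücker coordinates):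
for `1 ≤ l ≤ m-1`,
`∑_{k=0}^{l} (-1)^k p_{l-k} p_{2m-1+k-l} = (a_1⋯a_l)^2 a_{l+1}⋯a_{m-1} c b_{m-1}⋯b_{l+1}`. -/
theorem stmt0 (m : ℕ) (hm : 2 ≤ m) (a b : ℕ → ℂ) (c : ℂ)
    (ha : ∀ i, 1 ≤ i → i ≤ m - 1 → a i ≠ 0)
    (hb : ∀ i, 1 ≤ i → i ≤ m - 1 → b i ≠ 0) (hc : c ≠ 0)
    (p : ℕ → ℂ) (hp0 : p 0 = 1)
    (hp1 : ∀ k, 1 ≤ k → k ≤ m - 1 →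
      p k = (∏ i ∈ Finset.Icc 1 (k - 1), a i) * (a k + b k))
    (hp2 : ∀ k, m ≤ k → k ≤ 2 * m - 1 →
      p k = (∏ i ∈ Finset.Icc 1 (m - 1), a i) * c * ∏ i ∈ Finset.Icc (2 * m - k) (m - 1), b i)
    (l : ℕ) (hl1 : 1 ≤ l) (hl2 : l ≤ m - 1) :
    ∑ k ∈ Finset.range (l + 1), (-1 : ℂ) ^ k * p (l - k) * p (2 * m - 1 + k - l)
      = (∏ i ∈ Finset.Icc 1 l, a i) ^ 2 * (∏ i ∈ Finset.Icc (l + 1) (m - 1), a i) * c *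
        ∏ i ∈ Finset.Icc (l + 1) (m - 1), b i :=
  stmt0_general m a b c p hp0 hp1 hp2 l hl1 hl2
end

section
/- Let $a_1,\dots,a_{m-1}, c, b_{m-1},\dots,b_1$ be nonzero complex numbers and define $p_k$ as follows: $p_0 = 1$, $p_k = a_1\cdots a_{k-1}(a_k+b_k)$ for $1 \le k \le m-1$, $p_k = a_1\cdots a_{m-1}\, c\, b_{m-1}\cdots b_{2m-k}$ for $m \le k \le 2m-1$. Then $p_1/p_0 + \sum_{l=1}^{m-1} \frac{p_{l+1} p_{2m-1-l}}{\sum_{k=0}^{l}(-1)^k p_{l-k} p_{2m-1+k-l}} + q\,\frac{p_1}{p_{2m-1}} = a_1 + \cdots + a_{m-1} + c + b_{m-1} + \cdots + b_1 + q\,\frac{a_1+b_1}{a_1\cdots a_{m-1}\, c\, b_{m-1}\cdots b_1}$, where $q$ is any complex number, assuming all denominators are nonzero. -/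
/-!
Write `D_l` for the alternating sum in the `l`-th denominator. Splitting off its `k = 0` term
gives the recursion `D_l = p_l p_{2m-1-l} - D_{l-1}`, and by induction
`D_l = (a_1 ⋯ a_l) p_{2m-1-l}`, since `p_{2m-1-l} = b_{l+1} p_{2m-2-l}`.
Hence `p_{l+1} p_{2m-1-l} = D_l (a_{l+1} + b_{l+1})` for `l < m - 1` and `p_m p_m = D_{m-1} c`,
so the `l`-th quotient is `a_{l+1} + b_{l+1}`, resp. `c`.
-/

open Finset

def alternatingConvolution {R : Type*} [CommRing R] (f g : ℕ → R) (N l : ℕ) : R :=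
  ∑ k ∈ range (l + 1), (-1) ^ k * f (l - k) * g (N + k - l)

theorem alternatingConvolution_succ {R : Type*} [CommRing R] (f g : ℕ → R) (N l : ℕ) :
    alternatingConvolution f g N (l + 1) =
      f (l + 1) * g (N - (l + 1)) - alternatingConvolution f g N l := by
  rw [alternatingConvolution, alternatingConvolution, sum_range_succ']
  simp only [pow_succ, Nat.add_sub_add_right, ← add_assoc, mul_neg_one, neg_mul, sum_neg_distrib,
    pow_zero, one_mul, Nat.sub_zero, add_zero]
  ring

theorem Finset.add_sum_Icc_shift {M : Type*} [AddCommMonoid M] (f : ℕ → M) (n : ℕ) :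
    f 1 + ∑ l ∈ Icc 1 n, f (l + 1) = ∑ i ∈ Icc 1 (n + 1), f i := by
  induction n with
  | zero => simp
  | succ n ih =>
    rw [sum_Icc_succ_top (by omega) (fun l ↦ f (l + 1)), ← add_assoc, ih,
      ← sum_Icc_succ_top (by omega)]

namespace OddQuadric

variable {m : ℕ} {a b : ℕ → ℂ} {c : ℂ} {p : ℕ → ℂ}

theorem p_two_mul_sub_eq
    (hp2 : ∀ k, m ≤ k → k ≤ 2 * m - 1 →
      p k = (∏ i ∈ Icc 1 (m - 1), a i) * c * ∏ i ∈ Icc (2 * m - k) (m - 1), b i)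
    {j : ℕ} (hj : 1 ≤ j) (hjm : j ≤ m) :
    p (2 * m - j) = (∏ i ∈ Icc 1 (m - 1), a i) * c * ∏ i ∈ Icc j (m - 1), b i := by
  rw [hp2 _ (by omega) (by omega), Nat.sub_sub_self (by omega)]

theorem alternatingConvolution_eq (hm : 1 ≤ m) (hp0 : p 0 = 1)
    (hp1 : ∀ k, 1 ≤ k → k ≤ m - 1 →
      p k = (∏ i ∈ Icc 1 (k - 1), a i) * (a k + b k))
    (hp2 : ∀ k, m ≤ k → k ≤ 2 * m - 1 →
      p k = (∏ i ∈ Icc 1 (m - 1), a i) * c * ∏ i ∈ Icc (2 * m - k) (m - 1), b i)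
    {l : ℕ} (hl : l ≤ m - 1) :
    alternatingConvolution p p (2 * m - 1) l =
      (∏ i ∈ Icc 1 l, a i) *
        ((∏ i ∈ Icc 1 (m - 1), a i) * c * ∏ i ∈ Icc (l + 1) (m - 1), b i) := by
  induction l with
  | zero =>
    simp [alternatingConvolution, hp0, p_two_mul_sub_eq hp2 le_rfl hm]
  | succ l ih =>
    rw [alternatingConvolution_succ, ih (by omega), hp1 _ (by omega) hl, Nat.add_sub_cancel,
      Nat.sub_sub, show 1 + (l + 1) = l + 1 + 1 by omega,
      p_two_mul_sub_eq hp2 (by omega) (by omega),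
      prod_Icc_succ_top (by omega), ← mul_prod_Ioc_eq_prod_Icc (by omega : l + 1 ≤ m - 1),
      ← Icc_add_one_left_eq_Ioc]
    ring

theorem mul_eq_alternatingConvolution_mul (hp0 : p 0 = 1)
    (hp1 : ∀ k, 1 ≤ k → k ≤ m - 1 →
      p k = (∏ i ∈ Icc 1 (k - 1), a i) * (a k + b k))
    (hp2 : ∀ k, m ≤ k → k ≤ 2 * m - 1 →
      p k = (∏ i ∈ Icc 1 (m - 1), a i) * c * ∏ i ∈ Icc (2 * m - k) (m - 1), b i)
    {l : ℕ} (hl : l + 1 ≤ m - 1) :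
    p (l + 1) * p (2 * m - 1 - l) =
      alternatingConvolution p p (2 * m - 1) l * (a (l + 1) + b (l + 1)) := by
  rw [alternatingConvolution_eq (by omega) hp0 hp1 hp2 (by omega), hp1 _ (by omega) hl,
    Nat.add_sub_cancel, Nat.sub_sub, add_comm 1 l, p_two_mul_sub_eq hp2 (by omega) (by omega)]
  ring

theorem mul_eq_alternatingConvolution_mul_top (hp0 : p 0 = 1)
    (hp1 : ∀ k, 1 ≤ k → k ≤ m - 1 →
      p k = (∏ i ∈ Icc 1 (k - 1), a i) * (a k + b k))
    (hp2 : ∀ k, m ≤ k → k ≤ 2 * m - 1 →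
      p k = (∏ i ∈ Icc 1 (m - 1), a i) * c * ∏ i ∈ Icc (2 * m - k) (m - 1), b i)
    {l : ℕ} (hl : l + 1 = m) :
    p (l + 1) * p (2 * m - 1 - l) = alternatingConvolution p p (2 * m - 1) l * c := by
  subst hl
  rw [alternatingConvolution_eq (by omega) hp0 hp1 hp2 (by omega),
    show 2 * (l + 1) - 1 - l = l + 1 by omega, hp2 _ le_rfl (by omega),
    show 2 * (l + 1) - (l + 1) = l + 1 by omega, Nat.add_sub_cancel,
    Icc_eq_empty (show ¬l + 1 ≤ l by omega), prod_empty]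
  ring

end OddQuadric

open OddQuadric in
theorem stmt1_general (m : ℕ) (hm : 2 ≤ m) (a b : ℕ → ℂ) (c q : ℂ)
    (p : ℕ → ℂ) (hp0 : p 0 = 1)
    (hp1 : ∀ k, 1 ≤ k → k ≤ m - 1 →
      p k = (∏ i ∈ Finset.Icc 1 (k - 1), a i) * (a k + b k))
    (hp2 : ∀ k, m ≤ k → k ≤ 2 * m - 1 →
      p k = (∏ i ∈ Finset.Icc 1 (m - 1), a i) * c * ∏ i ∈ Finset.Icc (2 * m - k) (m - 1), b i)
    (hden : ∀ l, 1 ≤ l → l ≤ m - 1 →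
      (∑ k ∈ Finset.range (l + 1), (-1 : ℂ) ^ k * p (l - k) * p (2 * m - 1 + k - l)) ≠ 0) :
    p 1 / p 0
      + (∑ l ∈ Finset.Icc 1 (m - 1), p (l + 1) * p (2 * m - 1 - l) /
          (∑ k ∈ Finset.range (l + 1), (-1 : ℂ) ^ k * p (l - k) * p (2 * m - 1 + k - l)))
      + q * p 1 / p (2 * m - 1)
    = (∑ i ∈ Finset.Icc 1 (m - 1), a i) + c + (∑ i ∈ Finset.Icc 1 (m - 1), b i)
      + q * (a 1 + b 1) /
          ((∏ i ∈ Finset.Icc 1 (m - 1), a i) * c * ∏ i ∈ Finset.Icc 1 (m - 1), b i) := by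
  simp only [← alternatingConvolution.eq_1] at hden ⊢
  obtain ⟨n, hn⟩ : ∃ n, m - 1 = n + 1 := ⟨m - 2, by omega⟩
  have hterms : ∑ l ∈ Icc 1 (m - 1),
      p (l + 1) * p (2 * m - 1 - l) / alternatingConvolution p p (2 * m - 1) l =
        ∑ l ∈ Icc 1 n, (a (l + 1) + b (l + 1)) + c := by
    rw [hn, sum_Icc_succ_top (by omega),
      mul_eq_alternatingConvolution_mul_top hp0 hp1 hp2 (by omega),
      mul_div_cancel_left₀ _ (hden _ (by omega) (by omega))]
    refine congrArg (· + c) (sum_congr rfl fun l hl ↦ ?_)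
    rw [mem_Icc] at hl
    rw [mul_eq_alternatingConvolution_mul hp0 hp1 hp2 (by omega),
      mul_div_cancel_left₀ _ (hden _ hl.1 (by omega))]
  have hp1_eq : p 1 = a 1 + b 1 := by simpa using hp1 1 le_rfl (by omega)
  rw [hterms, hp0, hp1_eq, p_two_mul_sub_eq hp2 le_rfl (by omega), hn, ← add_sum_Icc_shift a,
    ← add_sum_Icc_shift b, sum_add_distrib]
  ring

/-- Equality of the Plücker-coordinate form of the superpotential `W_q` for the odd
quadric `Q_{2m-1}` with its Laurent-polynomial form in factorization coordinates. -/
theorem stmt1 (m : ℕ) (hm : 2 ≤ m) (a b : ℕ → ℂ) (c q : ℂ)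
    (ha : ∀ i, 1 ≤ i → i ≤ m - 1 → a i ≠ 0)
    (hb : ∀ i, 1 ≤ i → i ≤ m - 1 → b i ≠ 0) (hc : c ≠ 0)
    (p : ℕ → ℂ) (hp0 : p 0 = 1)
    (hp1 : ∀ k, 1 ≤ k → k ≤ m - 1 →
      p k = (∏ i ∈ Finset.Icc 1 (k - 1), a i) * (a k + b k))
    (hp2 : ∀ k, m ≤ k → k ≤ 2 * m - 1 →
      p k = (∏ i ∈ Finset.Icc 1 (m - 1), a i) * c * ∏ i ∈ Finset.Icc (2 * m - k) (m - 1), b i)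
    (hden : ∀ l, 1 ≤ l → l ≤ m - 1 →
      (∑ k ∈ Finset.range (l + 1), (-1 : ℂ) ^ k * p (l - k) * p (2 * m - 1 + k - l)) ≠ 0)
    (htop : p (2 * m - 1) ≠ 0) :
    p 1 / p 0
      + (∑ l ∈ Finset.Icc 1 (m - 1), p (l + 1) * p (2 * m - 1 - l) /
          (∑ k ∈ Finset.range (l + 1), (-1 : ℂ) ^ k * p (l - k) * p (2 * m - 1 + k - l)))
      + q * p 1 / p (2 * m - 1)
    = (∑ i ∈ Finset.Icc 1 (m - 1), a i) + c + (∑ i ∈ Finset.Icc 1 (m - 1), b i)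
      + q * (a 1 + b 1) /
          ((∏ i ∈ Finset.Icc 1 (m - 1), a i) * c * ∏ i ∈ Finset.Icc 1 (m - 1), b i) :=
  stmt1_general m hm a b c q p hp0 hp1 hp2 hden
end

section
/- Set $p_0 = 1$ and let $p_1,\dots,p_{2m-1}, q$ be complex numbers such that all the expressions below are defined and nonzero where they appear in denominators. Define $y_1 = p_1$, $y_i = p_i/p_{i-1}$ for $2 \le i \le m-1$, $z_1 = q/p_{2m-1}$, $z_i = \frac{\sum_{k=0}^{i-2}(-1)^k p_{i-2-k} p_{2m+1+k-i}}{\sum_{k=0}^{i-1}(-1)^k p_{i-1-k} p_{2m+k-i}}$ for $2 \le i \le m-1$, and $x = \frac{p_m}{\sum_{k=0}^{m-1}(-1)^k p_{m-1-k} p_{m+k}}$. Then $\sum_{i=1}^{m-1} y_i(1+z_i) + q\,\frac{x^2}{(x y_1 y_2 \cdots y_{m-1} - 1)\, z_1 z_2 \cdots z_{m-1}} = p_1 + \sum_{l=1}^{m-1} \frac{p_{l+1} p_{2m-1-l}}{\sum_{k=0}^{l}(-1)^k p_{l-k} p_{2m-1+k-l}} + q\,\frac{p_1}{p_{2m-1}}$.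 -/
/-!
The sums `S i` satisfy `S (i + 1) = p i * p (2m - 1 - i) - S i` with `S 1 = p (2m - 1)`. Hence
`∏ y = p (m - 1)` and `∏ z = q / S (m - 1)` telescope, the recurrence at `i = m` gives
`x * p (m - 1) - 1 = S (m - 1) / S m`, so the `q`-term of the left side is `p m ^ 2 / S m`, and for
`2 ≤ i` it gives `y i * (1 + z i) = p i * p (2m - i) / S i`. After the shift `i = l + 1` the right
side consists of the same terms, with `y 1 * (1 + z 1) = p 1 + q * p 1 / p (2m - 1)`.
-/

open Finset

section
variable {R : Type*} [CommRing R]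

def altConv (p : ℕ → R) (N i : ℕ) : R :=
  ∑ k ∈ range i, (-1) ^ k * p (i - 1 - k) * p (N + k - i)

theorem altConv_one (p : ℕ → R) (N : ℕ) : altConv p N 1 = p 0 * p (N - 1) := by
  simp [altConv]

theorem altConv_succ (p : ℕ → R) (N i : ℕ) :
    altConv p N (i + 1) = p i * p (N - 1 - i) - altConv p N i := by
  rw [altConv, altConv, sum_range_succ', sub_eq_neg_add, ← sum_neg_distrib]
  congr 1
  · refine sum_congr rfl fun k _ => ?_
    rw [show i + 1 - 1 - (k + 1) = i - 1 - k by omega,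
      show N + (k + 1) - (i + 1) = N + k - i by omega, pow_succ]
    ring
  · rw [show N + 0 - (i + 1) = N - 1 - i by omega]
    simp

theorem altConv_eq_sub {p : ℕ → R} {N i : ℕ} (hi : 1 ≤ i) :
    altConv p N i = p (i - 1) * p (N - i) - altConv p N (i - 1) := by
  obtain ⟨j, rfl⟩ := Nat.exists_eq_add_of_le' hi
  rw [Nat.add_sub_cancel, altConv_succ, Nat.sub_sub, add_comm 1 j]

end

section
variable {K : Type*} [Field K]

theorem prod_Icc_eq_of_eq_div {u r : ℕ → K} {n : ℕ} (hn : 1 ≤ n)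
    (hu : ∀ i, 1 ≤ i → i < n → u i ≠ 0) (hr1 : r 1 = u 1)
    (hr : ∀ i, 2 ≤ i → i ≤ n → r i = u i / u (i - 1)) :
    ∏ i ∈ Icc 1 n, r i = u n := by
  induction n, hn using Nat.le_induction with
  | base => simp [hr1]
  | succ n hn ih =>
    rw [prod_Icc_succ_top (by omega), ih (fun i h1 h2 => hu i h1 (by omega))
      (fun i h1 h2 => hr i h1 (by omega)), hr (n + 1) (by omega) le_rfl, Nat.add_sub_cancel,
      mul_div_cancel₀ _ (hu n hn (by omega))]

theorem div_mul_one_add_div_of_eq_mul_sub {a b c d e : K} (hb : b ≠ 0) (hd : d ≠ 0)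
    (h : d = b * e - c) : a / b * (1 + c / d) = a * e / d := by
  field_simp
  linear_combination a * h

theorem mul_sq_div_div_mul_div_of_eq_mul_sub {q a b s t : K} (hq : q ≠ 0) (hs : s ≠ 0)
    (ht : t ≠ 0) (h : t = b * a - s) :
    q * (a / t) ^ 2 / ((a / t * b - 1) * (q / s)) = a ^ 2 / t := by
  have hsub : a / t * b - 1 = s / t := by
    field_simp
    linear_combination -h
  rw [hsub]
  field_simp

end

theorem stmt5_general (m : ℕ) (hm : 2 ≤ m) (p : ℕ → ℂ) (q : ℂ) (hp0 : p 0 = 1)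
    (S : ℕ → ℂ)
    (hS : ∀ i, S i = ∑ k ∈ Finset.range i, (-1 : ℂ) ^ k * p (i - 1 - k) * p (2 * m + k - i))
    (y z : ℕ → ℂ)
    (hy1 : y 1 = p 1) (hy : ∀ i, 2 ≤ i → i ≤ m - 1 → y i = p i / p (i - 1))
    (hz1 : z 1 = q / p (2 * m - 1)) (hz : ∀ i, 2 ≤ i → i ≤ m - 1 → z i = S (i - 1) / S i)
    (x : ℂ) (hx : x = p m / S m)
    (hq : q ≠ 0)
    (hp : ∀ i, 1 ≤ i → i ≤ m - 1 → p i ≠ 0)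
    (hSne : ∀ i, 1 ≤ i → i ≤ m → S i ≠ 0) :
    (∑ i ∈ Finset.Icc 1 (m - 1), y i * (1 + z i))
      + q * x ^ 2 /
          ((x * (∏ i ∈ Finset.Icc 1 (m - 1), y i) - 1) * ∏ i ∈ Finset.Icc 1 (m - 1), z i)
    = p 1 + (∑ l ∈ Finset.Icc 1 (m - 1), p (l + 1) * p (2 * m - 1 - l) / S (l + 1))
        + q * p 1 / p (2 * m - 1) := by
  have hS' : S = altConv p (2 * m) := funext hS
  have hrec (i : ℕ) (hi : 1 ≤ i) : S i = p (i - 1) * p (2 * m - i) - S (i - 1) := by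
    rw [hS', altConv_eq_sub hi]
  have hyprod : ∏ i ∈ Icc 1 (m - 1), y i = p (m - 1) :=
    prod_Icc_eq_of_eq_div (by omega) (fun i h1 h2 => hp i h1 h2.le) hy1 hy
  have hzprod : ∏ i ∈ Icc 1 (m - 1), z i = q / S (m - 1) := by
    refine prod_Icc_eq_of_eq_div (u := fun i => q / S i) (by omega)
      (fun i h1 h2 => div_ne_zero hq (hSne i h1 (by omega))) ?_ fun i h1 h2 => ?_
    · rw [hz1, hS', altConv_one, hp0, one_mul]
    · rw [hz i h1 h2, div_div_div_cancel_left' _ _ hq]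
  have hlast : q * x ^ 2 / ((x * ∏ i ∈ Icc 1 (m - 1), y i - 1) * ∏ i ∈ Icc 1 (m - 1), z i)
      = p m ^ 2 / S m := by
    rw [hyprod, hzprod, hx]
    refine mul_sq_div_div_mul_div_of_eq_mul_sub hq (hSne _ (by omega) (by omega))
      (hSne m (by omega) le_rfl) ?_
    rw [hrec m (by omega), show 2 * m - m = m by omega]
  have hterm : ∀ i ∈ Icc 2 (m - 1), y i * (1 + z i) = p i * p (2 * m - i) / S i := by
    intro i hi
    obtain ⟨h1, h2⟩ := mem_Icc.mp hi
    rw [hy i h1 h2, hz i h1 h2]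
    exact div_mul_one_add_div_of_eq_mul_sub (hp _ (by omega) (by omega))
      (hSne i (by omega) (by omega)) (hrec i (by omega))
  have hshift : ∑ l ∈ Icc 1 (m - 1), p (l + 1) * p (2 * m - 1 - l) / S (l + 1)
      = ∑ i ∈ Icc 2 m, p i * p (2 * m - i) / S i := by
    rw [show Icc 2 m = Icc (1 + 1) (m - 1 + 1) by congr 1; omega, ← map_add_right_Icc, sum_map]
    refine sum_congr rfl fun l _ => ?_
    rw [addRightEmbedding_apply, Nat.sub_sub, add_comm 1 l]
  rw [hlast, hshift, ← insert_Icc_add_one_left_eq_Icc (show 1 ≤ m - 1 by omega),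
    sum_insert (by simp), show 1 + 1 = 2 from rfl, sum_congr rfl hterm,
    ← insert_Icc_sub_one_right_eq_Icc hm, sum_insert (by simp; omega), hy1, hz1,
    show 2 * m - m = m by omega]
  ring

/-- Proposition 6.1: the Gorbounov–Smirnov change of coordinates transforms their
Landau–Ginzburg model into the Plücker-coordinate superpotential `W_q` for `Q_{2m-1}`.
Here `S i = ∑_{k=0}^{i-1} (-1)^k p_{i-1-k} p_{2m+k-i}` so that the denominator of
`z_i` is `S i`, its numerator is `S (i-1)`, the denominator appearing in `x` is `S m`,
and the denominator of the `l`-th term of `W_q` is `S (l+1)`. -/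
theorem stmt5 (m : ℕ) (hm : 2 ≤ m) (p : ℕ → ℂ) (q : ℂ) (hp0 : p 0 = 1)
    (S : ℕ → ℂ)
    (hS : ∀ i, S i = ∑ k ∈ Finset.range i, (-1 : ℂ) ^ k * p (i - 1 - k) * p (2 * m + k - i))
    (y z : ℕ → ℂ)
    (hy1 : y 1 = p 1) (hy : ∀ i, 2 ≤ i → i ≤ m - 1 → y i = p i / p (i - 1))
    (hz1 : z 1 = q / p (2 * m - 1)) (hz : ∀ i, 2 ≤ i → i ≤ m - 1 → z i = S (i - 1) / S i)
    (x : ℂ) (hx : x = p m / S m)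
    (hq : q ≠ 0)
    (hp : ∀ i, 1 ≤ i → i ≤ m - 1 → p i ≠ 0) (htop : p (2 * m - 1) ≠ 0)
    (hSne : ∀ i, 1 ≤ i → i ≤ m → S i ≠ 0)
    (hxy : x * (∏ i ∈ Finset.Icc 1 (m - 1), y i) - 1 ≠ 0) :
    (∑ i ∈ Finset.Icc 1 (m - 1), y i * (1 + z i))
      + q * x ^ 2 /
          ((x * (∏ i ∈ Finset.Icc 1 (m - 1), y i) - 1) * ∏ i ∈ Finset.Icc 1 (m - 1), z i)
    = p 1 + (∑ l ∈ Finset.Icc 1 (m - 1), p (l + 1) * p (2 * m - 1 - l) / S (l + 1))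
        + q * p 1 / p (2 * m - 1) :=
  stmt5_general m hm p q hp0 S hS y z hy1 hy hz1 hz x hx hq hp hSne
end

section
/- Let $a_1,\dots,a_{m-1}, b_1,\dots,b_{m-1}, c$ be nonzero complex numbers, and let $\bar u_2 = y_1(a_1)\cdots y_{m-1}(a_{m-1})\, y_m(c)\, y_{m-1}(b_{m-1})\cdots y_1(b_1)$ where $y_i(a) = I + a(E_{i+1,i} + E_{2m-i+1, 2m-i})$ for $1 \le i \le m-1$ and $y_m(c) = I + c\, E_{m+1,m}$. Then the last row of $\bar u_2$ is $(p_{2m-1}, p_{2m-2}, \dots, p_1, p_0)$, where $p_0 = 1$, $p_k = a_1\cdots a_{k-1}(a_k + b_k)$ for $1 \le k \le m-1$, and $p_k = a_1\cdots a_{m-1}\, c\, b_{m-1}\cdots b_{2m-k}$ for $m \le k \le 2m-1$. -/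
/-!
Right multiplication by `y_i(t)` adds `t` times entry `i` to entry `i - 1` and, for `i < m`,
`t` times entry `2m - i` to entry `2m - i - 1`. Following the last row through the factors:
`y₁(a₁), …, y_{m-1}(a_{m-1})` fill it with the prefix products `a₁⋯a_k`, `y_m(c)` starts the
tail `a₁⋯a_{m-1} c`, and each `y_i(b_i)` then turns `a₁⋯a_i` into `a₁⋯a_{i-1}(a_i + b_i)` and
extends the tail by one factor `b_i`.
-/

open Matrix Finset

/-- The lower unipotent generator `y_i(a) = I + a(E_{i+1,i} + E_{2m-i+1,2m-i})` for
`1 ≤ i ≤ m-1` and `y_m(c) = I + c E_{m+1,m}` (1-indexed positions, 0-indexed entries;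
the second summand is present only when `i < m` since for `i = m` both coincide). -/
def yMat (m i : ℕ) (t : ℂ) : Matrix (Fin (2 * m)) (Fin (2 * m)) ℂ :=
  1 + t • Matrix.of ((fun j k =>
    (if (j : ℕ) = i ∧ (k : ℕ) + 1 = i then 1 else 0) +
    (if i < m ∧ (j : ℕ) = 2 * m - i ∧ (k : ℕ) + 1 = 2 * m - i then 1 else 0)) :
      Matrix (Fin (2 * m)) (Fin (2 * m)) ℂ)

/-- Row vectors are indexed from the right, by `k = 2m - 1 - j`, so that the entry of the
final row at index `k` is `p_k`. -/
def revVec (m : ℕ) (f : ℕ → ℂ) : Fin (2 * m) → ℂ := fun j => f (2 * m - 1 - j)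

/-- The last row of `y₁(a₁)⋯yₙ(aₙ)`, read through `revVec`. -/
def aRow (a : ℕ → ℂ) (n k : ℕ) : ℂ := if k ≤ n then ∏ i ∈ Icc 1 k, a i else 0

/-- The last row of `y₁(a₁)⋯y_{m-1}(a_{m-1}) y_m(c) y_{m-1}(b_{m-1})⋯y_{n+1}(b_{n+1})`,
read through `revVec`. -/
def bRow (m : ℕ) (a b : ℕ → ℂ) (c : ℂ) (n k : ℕ) : ℂ :=
  if k ≤ n then ∏ i ∈ Icc 1 k, a i
  else if k < m then (∏ i ∈ Icc 1 (k - 1), a i) * (a k + b k)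
  else if k + n < 2 * m then (∏ i ∈ Icc 1 (m - 1), a i) * c * ∏ i ∈ Icc (2 * m - k) (m - 1), b i
  else 0

theorem revVec_vecMul_yMat {m i : ℕ} (hi : 1 ≤ i) (him : i ≤ m) (t : ℂ) (f : ℕ → ℂ) :
    revVec m f ᵥ* yMat m i t = revVec m (fun k => f k +
      t * ((if k = 2 * m - i then f (2 * m - 1 - i) else 0) +
        if i < m ∧ k = i then f (i - 1) else 0)) := by
  ext j
  have hj := j.isLt
  rw [yMat, vecMul_add, vecMul_one]
  simp only [Pi.add_apply, vecMul, dotProduct, Matrix.smul_apply, of_apply, smul_eq_mul,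
    mul_add, sum_add_distrib, revVec]
  congr 2
  · rw [sum_eq_single ⟨i, by omega⟩ (fun l _ hl => by simp [Fin.ext_iff] at hl; simp [hl])
      (by simp)]
    dsimp only
    split_ifs <;> first | (exfalso; omega) | ring
  · rw [sum_eq_single ⟨2 * m - i, by omega⟩ (fun l _ hl => by simp [Fin.ext_iff] at hl; simp [hl])
      (by simp), show 2 * m - 1 - (2 * m - i) = i - 1 by omega]
    dsimp only
    split_ifs <;> first | (exfalso; omega) | ring

section

variable {m : ℕ} (a b : ℕ → ℂ) (c : ℂ)

theorem single_last_eq_revVec_aRow_zero (hm : 1 ≤ m) :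
    Pi.single (⟨2 * m - 1, by omega⟩ : Fin (2 * m)) 1 = revVec m (aRow a 0) := by
  ext j
  have hj := j.isLt
  simp only [Pi.single_apply, Fin.ext_iff, revVec, aRow, nonpos_iff_eq_zero]
  split_ifs with _ h₂ <;> first | rfl | (exfalso; omega) | simp [h₂]

theorem revVec_aRow_vecMul_yMat {n : ℕ} (hn : n + 1 < m) :
    revVec m (aRow a n) ᵥ* yMat m (n + 1) (a (n + 1)) = revVec m (aRow a (n + 1)) := by
  rw [revVec_vecMul_yMat (by omega) (by omega)]
  congr 1
  funext k
  rw [show 2 * m - 1 - (n + 1) = 2 * m - 2 - n by omega]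
  simp only [aRow]
  split_ifs <;> first | (exfalso; omega) | simp_all [prod_Icc_succ_top, mul_comm]

theorem revVec_aRow_zero_vecMul_prod {n : ℕ} (hn : n < m) :
    revVec m (aRow a 0) ᵥ* ((List.range n).map fun i => yMat m (i + 1) (a (i + 1))).prod =
      revVec m (aRow a n) := by
  induction n with
  | zero => simp
  | succ n ih =>
    rw [List.range_succ, List.map_append, List.prod_append, ← vecMul_vecMul, ih (by omega),
      List.map_singleton, List.prod_singleton, revVec_aRow_vecMul_yMat a hn]

theorem revVec_aRow_vecMul_yMat_center (hm : 1 ≤ m) :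
    revVec m (aRow a (m - 1)) ᵥ* yMat m m c = revVec m (bRow m a b c (m - 1)) := by
  rw [revVec_vecMul_yMat hm le_rfl]
  congr 1
  funext k
  rw [show 2 * m - m = m by omega, show 2 * m - 1 - m = m - 1 by omega]
  rcases eq_or_ne m k with rfl | hk
  · have hcenter : bRow m a b c (m - 1) m = (∏ i ∈ Icc 1 (m - 1), a i) * c := by
      rw [bRow, if_neg (by omega), if_neg (by omega), if_pos (by omega),
        show 2 * m - m = m by omega, Icc_eq_empty (show ¬m ≤ m - 1 by omega), prod_empty,
        mul_one]
    rw [hcenter, if_pos rfl, if_neg (by omega), add_zero, aRow, aRow, if_neg (by omega),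
      if_pos le_rfl]
    ring
  · rw [if_neg (Ne.symm hk), if_neg (by omega), add_zero, mul_zero, add_zero, aRow, bRow]
    split_ifs <;> first | rfl | (exfalso; omega)

theorem revVec_bRow_vecMul_yMat {n : ℕ} (hn : n + 1 < m) :
    revVec m (bRow m a b c (n + 1)) ᵥ* yMat m (n + 1) (b (n + 1)) =
      revVec m (bRow m a b c n) := by
  rw [revVec_vecMul_yMat (by omega) (by omega)]
  congr 1
  funext k
  have htail : bRow m a b c (n + 1) (2 * m - 1 - (n + 1)) =
      (∏ i ∈ Icc 1 (m - 1), a i) * c * ∏ i ∈ Icc (n + 1 + 1) (m - 1), b i := by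
    rw [bRow, if_neg (by omega), if_neg (by omega), if_pos (by omega),
      show 2 * m - (2 * m - 1 - (n + 1)) = n + 1 + 1 by omega]
  have hprefix : bRow m a b c (n + 1) (n + 1 - 1) = ∏ i ∈ Icc 1 n, a i := by
    rw [bRow, if_pos (by omega), Nat.add_sub_cancel]
  rw [htail, hprefix]
  rcases eq_or_ne k (n + 1) with rfl | hk₁
  · rw [if_neg (by omega), if_pos ⟨hn, rfl⟩, bRow, bRow, if_pos le_rfl, if_neg (by omega),
      if_pos hn, prod_Icc_succ_top (by omega), Nat.add_sub_cancel]
    ring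
  rcases eq_or_ne k (2 * m - (n + 1)) with rfl | hk₂
  · rw [if_pos rfl, if_neg (by omega), bRow, bRow, if_neg (by omega), if_neg (by omega),
      if_neg (by omega), if_neg (by omega), if_neg (by omega), if_pos (by omega),
      show 2 * m - (2 * m - (n + 1)) = n + 1 by omega,
      ← insert_Icc_add_one_left_eq_Icc (show n + 1 ≤ m - 1 by omega), prod_insert (by simp)]
    ring
  · rw [if_neg hk₂, if_neg (by omega), add_zero, mul_zero, add_zero, bRow, bRow]
    split_ifs <;> first | rfl | (exfalso; omega)

theorem revVec_bRow_vecMul_prod {n : ℕ} (hn : n < m) :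
    revVec m (bRow m a b c n) ᵥ*
        ((List.range n).reverse.map fun i => yMat m (i + 1) (b (i + 1))).prod =
      revVec m (bRow m a b c 0) := by
  induction n with
  | zero => simp
  | succ n ih =>
    rw [List.range_succ, List.reverse_append, List.reverse_singleton, List.singleton_append,
      List.map_cons, List.prod_cons, ← vecMul_vecMul, revVec_bRow_vecMul_yMat a b c hn,
      ih (by omega)]

theorem bRow_zero_eq {p : ℕ → ℂ} (hp0 : p 0 = 1)
    (hp1 : ∀ k, 1 ≤ k → k ≤ m - 1 → p k = (∏ i ∈ Icc 1 (k - 1), a i) * (a k + b k))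
    (hp2 : ∀ k, m ≤ k → k ≤ 2 * m - 1 →
      p k = (∏ i ∈ Icc 1 (m - 1), a i) * c * ∏ i ∈ Icc (2 * m - k) (m - 1), b i)
    {k : ℕ} (hk : k ≤ 2 * m - 1) :
    bRow m a b c 0 k = p k := by
  rw [bRow]
  split_ifs with h₀
  · rw [Nat.le_zero.mp h₀, hp0, Icc_eq_empty (by omega), prod_empty]
  · rw [hp1 k (by omega) (by omega)]
  · rw [hp2 k (by omega) (by omega)]
  · omega

end

/-- The last row of `ū₂ = y₁(a₁)⋯y_{m-1}(a_{m-1}) y_m(c) y_{m-1}(b_{m-1})⋯y₁(b₁)`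
is `(p_{2m-1}, p_{2m-2}, …, p_1, p_0)`, i.e. its `j`-th entry is `p_{2m-1-j}`,
where `p_0 = 1`, `p_k = a_1⋯a_{k-1}(a_k+b_k)` for `1 ≤ k ≤ m-1`, and
`p_k = a_1⋯a_{m-1} c b_{m-1}⋯b_{2m-k}` for `m ≤ k ≤ 2m-1`. -/
theorem stmt10 (m : ℕ) (hm : 2 ≤ m) (a b : ℕ → ℂ) (c : ℂ)
    (p : ℕ → ℂ) (hp0 : p 0 = 1)
    (hp1 : ∀ k, 1 ≤ k → k ≤ m - 1 →
      p k = (∏ i ∈ Finset.Icc 1 (k - 1), a i) * (a k + b k))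
    (hp2 : ∀ k, m ≤ k → k ≤ 2 * m - 1 →
      p k = (∏ i ∈ Finset.Icc 1 (m - 1), a i) * c * ∏ i ∈ Finset.Icc (2 * m - k) (m - 1), b i) :
    ∀ j : Fin (2 * m),
      ((((List.range (m - 1)).map (fun i => yMat m (i + 1) (a (i + 1)))).prod *
        yMat m m c *
        (((List.range (m - 1)).reverse.map (fun i => yMat m (i + 1) (b (i + 1)))).prod))
        (⟨2 * m - 1, by omega⟩ : Fin (2 * m)) j) = p (2 * m - 1 - (j : ℕ)) := by
  intro j
  refine (congrFun (single_one_vecMul _ _) j).symm.trans ?_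
  rw [single_last_eq_revVec_aRow_zero a (by omega), ← vecMul_vecMul, ← vecMul_vecMul,
    revVec_aRow_zero_vecMul_prod a (by omega), revVec_aRow_vecMul_yMat_center a b c (by omega),
    revVec_bRow_vecMul_prod a b c (by omega)]
  exact bRow_zero_eq a b c hp0 hp1 hp2 (by omega)
end
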